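/- Let p be a periodic point of f of period k and suppose λ₊(p) − λ₋(p) < θ, where λ₊(p) = lim_n (1/(kn)) log‖A^{kn}(p)‖ and λ₋(p) = −lim_n (1/(kn)) log‖A^{kn}(p)^{-1}‖. Then there exists N > 0 (a multiple of k) such that p ∈ D(N,θ): for all s ≥ 1, ∏_{j=0}^{s-1}‖A^{±N}(f^{±jN}(p))‖·‖A^{±N}(f^{±jN}(p))^{-1}‖ ≤ e^{sNθ}. -/

import Mathlib

open Matrix Filter

/-- The Euclidean operator norm of a real `d × d` matrix. -/
noncomputable def opNorm {d : ℕ} (M : Matrix (Fin d) (Fin d) ℝ) : ℝ :=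
  ‖(Matrix.toEuclideanLin M).toContinuousLinearMap‖

/-- Iterates of a linear cocycle for nonnegative times:
`A^0(x) = Id`, `A^(n+1)(x) = A(f^n x) * A^n(x)`. -/
noncomputable def cocN {X : Type*} {d : ℕ} (f : Equiv.Perm X) (A : X → GL (Fin d) ℝ) :
    ℕ → X → GL (Fin d) ℝ
  | 0, _ => 1
  | n + 1, x => A ((f ^ n) x) * cocN f A n x

/-- Iterates of a linear cocycle for all integer times; for `n < 0`,
`A^n(x) = A(f^n x)^{-1} ⋯ A(f^{-1} x)^{-1} = (A^{-n}(f^n x))^{-1}`. -/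
noncomputable def coc {X : Type*} {d : ℕ} (f : Equiv.Perm X) (A : X → GL (Fin d) ℝ)
    (n : ℤ) (x : X) : GL (Fin d) ℝ :=
  if 0 ≤ n then cocN f A n.toNat x
  else (cocN f A (-n).toNat ((f ^ n) x))⁻¹

/-- The set `D(N,θ)` of points whose forward and backward products of quasiconformal
distortions at scale `N` grow at exponential rate at most `θ`. -/
noncomputable def Dset {X : Type*} {d : ℕ} (f : Equiv.Perm X) (A : X → GL (Fin d) ℝ)
    (N : ℕ) (θ : ℝ) : Set X :=
  {x | ∀ s : ℕ, 1 ≤ s →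
    (∏ j ∈ Finset.range s,
        opNorm ((coc f A (N : ℤ) ((f ^ ((j : ℤ) * N)) x) : Matrix (Fin d) (Fin d) ℝ)) *
          opNorm ((((coc f A (N : ℤ) ((f ^ ((j : ℤ) * N)) x))⁻¹ : GL (Fin d) ℝ) :
            Matrix (Fin d) (Fin d) ℝ)))
      ≤ Real.exp (s * N * θ) ∧
    (∏ j ∈ Finset.range s,
        opNorm ((coc f A (-(N : ℤ)) ((f ^ (-((j : ℤ) * N))) x) : Matrix (Fin d) (Fin d) ℝ)) *
          opNorm ((((coc f A (-(N : ℤ)) ((f ^ (-((j : ℤ) * N))) x))⁻¹ : GL (Fin d) ℝ) :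
            Matrix (Fin d) (Fin d) ℝ)))
      ≤ Real.exp (s * N * θ)}

/- Take `N = k n` with `n` so large that `log ‖A^N(p)‖ + log ‖A^N(p)⁻¹‖ < N θ`,
which the Lyapunov limits allow since `λ₊(p) - λ₋(p) < θ`. Since `f^N` fixes `p`, every
factor of both products defining `D(N,θ)` is the distortion `‖A^N(p)‖ ‖A^N(p)⁻¹‖`, so each
product is at most `e^{sNθ}`. -/

noncomputable def distortion {d : ℕ} (M : GL (Fin d) ℝ) : ℝ :=
  opNorm (M : Matrix (Fin d) (Fin d) ℝ) * opNorm ((M⁻¹ : GL (Fin d) ℝ) : Matrix (Fin d) (Fin d) ℝ)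

lemma distortion_nonneg {d : ℕ} (M : GL (Fin d) ℝ) : 0 ≤ distortion M :=
  mul_nonneg (norm_nonneg _) (norm_nonneg _)

lemma distortion_inv {d : ℕ} (M : GL (Fin d) ℝ) : distortion M⁻¹ = distortion M := by
  rw [distortion, distortion, inv_inv, mul_comm]

lemma mul_le_exp_log_add {a b : ℝ} (hb : 0 ≤ b) :
    a * b ≤ Real.exp (Real.log a + Real.log b) := by
  rw [Real.exp_add]
  exact mul_le_mul (Real.le_exp_log a) (Real.le_exp_log b) hb (Real.exp_nonneg _)

lemma eventually_distortion_le_exp {d : ℕ} (M : ℕ → GL (Fin d) ℝ) {t : ℕ → ℝ}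
    (ht : ∀ᶠ n in atTop, 0 < t n) {θ lplus lminus : ℝ}
    (hplus : Tendsto (fun n => Real.log (opNorm (M n : Matrix (Fin d) (Fin d) ℝ)) / t n)
      atTop (nhds lplus))
    (hminus : Tendsto (fun n => -(Real.log (opNorm (((M n)⁻¹ : GL (Fin d) ℝ) :
      Matrix (Fin d) (Fin d) ℝ)) / t n)) atTop (nhds lminus))
    (hgap : lplus - lminus < θ) :
    ∀ᶠ n in atTop, distortion (M n) ≤ Real.exp (t n * θ) := by
  filter_upwards [ht, (hplus.sub hminus).eventually_lt_const hgap] with n htn hn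
  rw [sub_neg_eq_add, ← add_div, div_lt_iff₀ htn, mul_comm] at hn
  calc distortion (M n) ≤ Real.exp (Real.log (opNorm (M n : Matrix (Fin d) (Fin d) ℝ)) +
        Real.log (opNorm (((M n)⁻¹ : GL (Fin d) ℝ) : Matrix (Fin d) (Fin d) ℝ))) :=
        mul_le_exp_log_add (norm_nonneg _)
    _ ≤ Real.exp (t n * θ) := Real.exp_le_exp.mpr hn.le

lemma Equiv.Perm.zpow_apply_eq_self_of_dvd {X : Type*} {f : Equiv.Perm X} {N : ℕ} {x : X}
    (hx : (f ^ N) x = x) {m : ℤ} (hm : (N : ℤ) ∣ m) : (f ^ m) x = x := by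
  obtain ⟨j, rfl⟩ := hm
  rw [_root_.zpow_mul, zpow_natCast]
  exact Function.IsFixedPt.perm_zpow hx j

section Cocycle

variable {X : Type*} {d : ℕ} (f : Equiv.Perm X) (A : X → GL (Fin d) ℝ)

lemma coc_natCast (N : ℕ) (x : X) : coc f A (N : ℤ) x = cocN f A N x := by
  simp [coc]

lemma coc_neg_natCast (N : ℕ) (x : X) :
    coc f A (-(N : ℤ)) x = (cocN f A N ((f ^ (-(N : ℤ))) x))⁻¹ := by
  rcases N.eq_zero_or_pos with rfl | hN
  · simp [coc, cocN]
  · simp [coc, hN.ne']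

lemma mem_Dset_iff {N : ℕ} {θ : ℝ} {x : X} :
    x ∈ Dset f A N θ ↔ ∀ s : ℕ, 1 ≤ s →
      ∏ j ∈ Finset.range s, distortion (coc f A (N : ℤ) ((f ^ ((j : ℤ) * N)) x))
        ≤ Real.exp (s * N * θ) ∧
      ∏ j ∈ Finset.range s, distortion (coc f A (-(N : ℤ)) ((f ^ (-((j : ℤ) * N))) x))
        ≤ Real.exp (s * N * θ) :=
  Iff.rfl

lemma mem_Dset_of_pow_apply_eq_self {N : ℕ} {θ : ℝ} {x : X} (hx : (f ^ N) x = x)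
    (h : distortion (cocN f A N x) ≤ Real.exp (N * θ)) : x ∈ Dset f A N θ := by
  have hfwd (j : ℕ) :
      distortion (coc f A (N : ℤ) ((f ^ ((j : ℤ) * N)) x)) = distortion (cocN f A N x) := by
    rw [Equiv.Perm.zpow_apply_eq_self_of_dvd hx (dvd_mul_left _ _), coc_natCast]
  have hbwd (j : ℕ) :
      distortion (coc f A (-(N : ℤ)) ((f ^ (-((j : ℤ) * N))) x)) = distortion (cocN f A N x) := by
    rw [Equiv.Perm.zpow_apply_eq_self_of_dvd hx ((dvd_mul_left _ _).neg_right),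
      coc_neg_natCast, Equiv.Perm.zpow_apply_eq_self_of_dvd hx (dvd_refl _).neg_right,
      distortion_inv]
  have hpow (s : ℕ) : distortion (cocN f A N x) ^ s ≤ Real.exp (s * N * θ) := by
    rw [mul_assoc, Real.exp_nat_mul]
    exact pow_le_pow_left₀ (distortion_nonneg _) h s
  rw [mem_Dset_iff]
  intro s _
  simp only [hfwd, hbwd, Finset.prod_const, Finset.card_range]
  exact ⟨hpow s, hpow s⟩

end Cocycle

theorem periodic_mem_Dset_general {X : Type*} {d : ℕ} (f : Equiv.Perm X) (A : X → GL (Fin d) ℝ)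
    (p : X) (k : ℕ) (hk : 1 ≤ k) (hp : (f ^ k) p = p)
    (θ : ℝ) (lplus lminus : ℝ)
    (hplus : Tendsto
      (fun n : ℕ => Real.log (opNorm ((coc f A ((k * n : ℕ) : ℤ) p : Matrix (Fin d) (Fin d) ℝ)))
        / (k * n : ℝ)) atTop (nhds lplus))
    (hminus : Tendsto
      (fun n : ℕ => -(Real.log (opNorm ((((coc f A ((k * n : ℕ) : ℤ) p)⁻¹ : GL (Fin d) ℝ) :
          Matrix (Fin d) (Fin d) ℝ))) / (k * n : ℝ))) atTop (nhds lminus))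
    (hgap : lplus - lminus < θ) :
    ∃ N : ℕ, 1 ≤ N ∧ k ∣ N ∧ p ∈ Dset f A N θ := by
  have hscale : ∀ᶠ n : ℕ in atTop, 0 < (k * n : ℝ) :=
    (eventually_ge_atTop 1).mono fun n hn => by positivity
  obtain ⟨n, hn, hdist⟩ := ((eventually_ge_atTop 1).and
    (eventually_distortion_le_exp _ hscale hplus hminus hgap)).exists
  have hperiodic : (f ^ (k * n)) p = p := by
    rw [pow_mul]
    exact Function.IsFixedPt.perm_pow hp n
  refine ⟨k * n, Nat.one_le_iff_ne_zero.mpr (by positivity), dvd_mul_right k n, ?_⟩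
  apply mem_Dset_of_pow_apply_eq_self f A hperiodic
  rw [coc_natCast] at hdist
  rwa [Nat.cast_mul]

/-- if `p` is a periodic point of period `k` whose extremal Lyapunov
exponents satisfy `λ₊(p) − λ₋(p) < θ`, then there is a multiple `N` of `k` with
`p ∈ D(N,θ)`. Here `λ₊(p) = lim (1/(kn)) log ‖A^{kn}(p)‖` and
`λ₋(p) = −lim (1/(kn)) log ‖(A^{kn}(p))⁻¹‖`. -/
theorem periodic_mem_Dset {X : Type*} {d : ℕ} (f : Equiv.Perm X) (A : X → GL (Fin d) ℝ)
    (p : X) (k : ℕ) (hk : 1 ≤ k) (hp : (f ^ k) p = p)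
    (θ : ℝ) (hθ : 0 < θ) (lplus lminus : ℝ)
    (hplus : Tendsto
      (fun n : ℕ => Real.log (opNorm ((coc f A ((k * n : ℕ) : ℤ) p : Matrix (Fin d) (Fin d) ℝ)))
        / (k * n : ℝ)) atTop (nhds lplus))
    (hminus : Tendsto
      (fun n : ℕ => -(Real.log (opNorm ((((coc f A ((k * n : ℕ) : ℤ) p)⁻¹ : GL (Fin d) ℝ) :
          Matrix (Fin d) (Fin d) ℝ))) / (k * n : ℝ))) atTop (nhds lminus))
    (hgap : lplus - lminus < θ) :
    ∃ N : ℕ, 1 ≤ N ∧ k ∣ N ∧ p ∈ Dset f A N θ :=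
  periodic_mem_Dset_general f A p k hk hp θ lplus lminus hplus hminus hgap
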